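/- arXiv:2404.11985 — 2 statements merged into one kernel-verified Lean document; each statement's English description precedes it below -/
import Mathlib

section
/- Observational entropy concentration for 2-designs (Theorem 3): Let ε ≥ 0 and let E = {(p_i, U_i)}_{i=1}^{N} be a finite ensemble of unitaries on ℂ^d (d ≥ 2) such that for every unit vector φ ∈ ℂ^d and every positive semidefinite P ≤ I, Σ_i p_i |Tr[U_i |φ⟩⟨φ| U_i† P] − Tr[u P]|² ≤ (1 + ε)·(4/d). Then for every density matrix ρ on ℂ^d, every POVM P = {P_x}_{x∈X} with finite outcome set and all volume terms V_x = Tr[P_x] strictly positive, and every δ > 0, Σ_{i : S_P(U_i ρ U_i†) ≤ (1−δ) log d} p_i ≤ (1/(κ(P)³ d log d)) · (4(1 + ε)/δ), where κ(P) = min_x Tr[u P_x]. -/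
open MeasureTheory Matrix Finset Filter
open scoped ComplexOrder

noncomputable section

/-- Borel-measurable structure on `d × d` complex matrices (entrywise). -/
instance matrixMeasurableSpace {d : ℕ} : MeasurableSpace (Matrix (Fin d) (Fin d) ℂ) :=
  inferInstanceAs (MeasurableSpace ((Fin d) → (Fin d) → ℂ))

/-- The maximally mixed state `u = I / d` on `ℂ^d`. -/
def mmix (d : ℕ) : Matrix (Fin d) (Fin d) ℂ := (d : ℂ)⁻¹ • 1

/-- Observational entropy of the state `ρ` with respect to the POVM `P = {P_x}`:
`S_P(ρ) = -∑_x Tr[P_x ρ] · log (Tr[P_x ρ] / Tr[P_x])` (natural log, `0 · log 0 = 0`). -/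
def obsEnt {d : ℕ} {X : Type*} [Fintype X]
    (P : X → Matrix (Fin d) (Fin d) ℂ) (ρ : Matrix (Fin d) (Fin d) ℂ) : ℝ :=
  -∑ x, ((P x * ρ).trace.re) * Real.log (((P x * ρ).trace.re) / ((P x).trace.re))

/-- `κ(P) = min_x Tr[u P_x]`. -/
def kappa {d : ℕ} {X : Type*} [Fintype X] [Nonempty X]
    (P : X → Matrix (Fin d) (Fin d) ℂ) : ℝ :=
  ⨅ x, ((mmix d * P x).trace.re)

/-- Frobenius (Hilbert–Schmidt) norm `‖A‖₂ = √(Tr[A† A])`. -/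
def frob {d : ℕ} (A : Matrix (Fin d) (Fin d) ℂ) : ℝ := Real.sqrt ((Aᴴ * A).trace.re)

/-!
With `q_x = Tr[P_x σ]` and `v_x = Tr[u P_x] = V_x / d`, the observational entropy is
`S_P(σ) = log d - D(q ‖ v)`. The relative entropy is bounded by the χ²-divergence, which is at
most `κ⁻¹ ∑_x (q_x - v_x)²`. The design hypothesis, extended from pure to mixed states by the
spectral decomposition and convexity of `t ↦ t²`, bounds the ensemble average of each
`(q_x - v_x)²` by `4(1+ε)/d`. There are at most `κ⁻¹` outcomes, so Markov's inequality for the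
event `D(q ‖ v) ≥ δ log d` bounds its probability by `4(1+ε) / (κ² d δ log d)`, and `κ ≤ 1`.
-/

section Matrices

variable {n : Type*} [Fintype n]

lemma Matrix.PosSemidef.re_trace_mul_nonneg {A B : Matrix n n ℂ}
    (hA : A.PosSemidef) (hB : B.PosSemidef) : 0 ≤ (A * B).trace.re := by
  classical
  open scoped MatrixOrder in
  obtain ⟨C, rfl⟩ := CStarAlgebra.nonneg_iff_eq_star_mul_self.mp hB.nonneg
  have hcycle : (A * (star C * C)).trace = (C * A * Cᴴ).trace := by
    rw [← Matrix.mul_assoc, Matrix.trace_mul_comm, Matrix.mul_assoc, star_eq_conjTranspose,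
      ← Matrix.mul_assoc]
  rw [hcycle]
  exact Complex.nonneg_iff.mp (hA.mul_mul_conjTranspose_same C).trace_nonneg |>.1

lemma Matrix.trace_mul_conj (A U M : Matrix n n ℂ) :
    (A * (U * M * Uᴴ)).trace = (Uᴴ * A * U * M).trace := by
  rw [← Matrix.mul_assoc, Matrix.trace_mul_comm, ← Matrix.mul_assoc, ← Matrix.mul_assoc,
    Matrix.mul_assoc Uᴴ]

variable [DecidableEq n]

lemma Matrix.trace_conj_of_mem_unitaryGroup {U : Matrix n n ℂ} (hU : U ∈ unitaryGroup n ℂ)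
    (ρ : Matrix n n ℂ) : (U * ρ * Uᴴ).trace = ρ.trace := by
  rw [Matrix.trace_mul_cycle, ← star_eq_conjTranspose, mem_unitaryGroup_iff'.mp hU,
    Matrix.one_mul]

lemma Matrix.IsHermitian.eq_sum_eigenvalues_smul_vecMulVec {ρ : Matrix n n ℂ}
    (h : ρ.IsHermitian) :
    ρ = ∑ k, (h.eigenvalues k : ℂ) •
      vecMulVec ⇑(h.eigenvectorBasis k) (star ⇑(h.eigenvectorBasis k)) := by
  conv_lhs => rw [h.spectral_theorem, Unitary.conjStarAlgAut_apply]
  ext a b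
  simp only [Matrix.sum_apply, mul_apply, diagonal_apply, smul_apply, vecMulVec_apply,
    Function.comp_apply, smul_eq_mul, star_apply, IsHermitian.eigenvectorUnitary_apply,
    Pi.star_apply, mul_ite, mul_zero, Finset.sum_ite_eq', Finset.mem_univ, if_true]
  exact Finset.sum_congr rfl fun k _ => (mul_right_comm _ _ _).trans (mul_comm _ _)

lemma Matrix.IsHermitian.star_eigenvectorBasis_dotProduct_self {ρ : Matrix n n ℂ}
    (h : ρ.IsHermitian) (k : n) :
    star ⇑(h.eigenvectorBasis k) ⬝ᵥ ⇑(h.eigenvectorBasis k) = 1 := by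
  rw [dotProduct_comm, ← EuclideanSpace.inner_eq_star_dotProduct, inner_self_eq_norm_sq_to_K,
    h.eigenvectorBasis.orthonormal.1 k]
  simp

lemma sum_mul_sq_re_trace_sub_le_of_pure {ι : Type*} [Fintype ι] {p : ι → ℝ}
    (hp : ∀ i, 0 ≤ p i) (B : ι → Matrix n n ℂ) {c C : ℝ}
    (hpure : ∀ φ : n → ℂ, star φ ⬝ᵥ φ = 1 →
      ∑ i, p i * ((B i * vecMulVec φ (star φ)).trace.re - c) ^ 2 ≤ C)
    {ρ : Matrix n n ℂ} (hρ : ρ.PosSemidef) (hρ1 : ρ.trace = 1) :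
    ∑ i, p i * ((B i * ρ).trace.re - c) ^ 2 ≤ C := by
  set lam := hρ.1.eigenvalues
  set w := fun k => ⇑(hρ.1.eigenvectorBasis k)
  set t := fun i k => (B i * vecMulVec (w k) (star (w k))).trace.re - c
  have hlam0 : ∀ k, 0 ≤ lam k := hρ.eigenvalues_nonneg
  have hlam1 : ∑ k, lam k = 1 := by
    have := congrArg Complex.re (hρ.1.trace_eq_sum_eigenvalues.symm.trans hρ1)
    simpa [Complex.re_sum] using this
  have hmix : ∀ i, (B i * ρ).trace.re - c = ∑ k, lam k * t i k := by
    intro i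
    conv_lhs => rw [hρ.1.eq_sum_eigenvalues_smul_vecMulVec]
    simp only [Matrix.mul_sum, Matrix.mul_smul, Matrix.trace_sum, Matrix.trace_smul, smul_eq_mul,
      Complex.re_sum, Complex.re_ofReal_mul]
    simp only [t, mul_sub, Finset.sum_sub_distrib, ← Finset.sum_mul, hlam1, one_mul]
    rfl
  have hjensen : ∀ i, (∑ k, lam k * t i k) ^ 2 ≤ ∑ k, lam k * t i k ^ 2 := fun i => by
    simpa only [smul_eq_mul] using
      (even_two.convexOn_pow (𝕜 := ℝ)).map_sum_le (fun k _ => hlam0 k) hlam1 (fun _ _ => trivial)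
  calc ∑ i, p i * ((B i * ρ).trace.re - c) ^ 2
      ≤ ∑ i, p i * ∑ k, lam k * t i k ^ 2 := by
        gcongr with i
        · exact hp i
        · rw [hmix i]; exact hjensen i
    _ = ∑ k, lam k * ∑ i, p i * t i k ^ 2 := by
        simp only [Finset.mul_sum, mul_left_comm (p _)]
        exact Finset.sum_comm
    _ ≤ ∑ k, lam k * C := by
        gcongr with k
        · exact hlam0 k
        · exact hpure _ (hρ.1.star_eigenvectorBasis_dotProduct_self k)
    _ = C := by rw [← Finset.sum_mul, hlam1, one_mul]

end Matrices

section Divergences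

variable {X : Type*} [Fintype X]

def relEntropy (q v : X → ℝ) : ℝ := ∑ x, q x * Real.log (q x / v x)

def chiSqDiv (q v : X → ℝ) : ℝ := ∑ x, (q x - v x) ^ 2 / v x

lemma neg_sum_mul_log_div_eq_log_sub_relEntropy {q V : X → ℝ} (hV : ∀ x, V x ≠ 0)
    (hq : ∑ x, q x = 1) {c : ℝ} (hc : 0 < c) :
    -∑ x, q x * Real.log (q x / V x) = Real.log c - relEntropy q (fun x => V x / c) := by
  have hterm : ∀ x, q x * Real.log (q x / (V x / c)) =
      q x * Real.log (q x / V x) + q x * Real.log c := by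
    intro x
    rcases eq_or_ne (q x) 0 with h0 | h0
    · simp [h0]
    · rw [div_div_eq_mul_div, mul_div_right_comm, Real.log_mul (div_ne_zero h0 (hV x)) hc.ne',
        mul_add]
  simp only [relEntropy, hterm, Finset.sum_add_distrib, ← Finset.sum_mul, hq]
  ring

lemma relEntropy_le_chiSqDiv {q v : X → ℝ} (hq : ∀ x, 0 ≤ q x) (hv : ∀ x, 0 < v x)
    (hsum : ∑ x, q x = ∑ x, v x) : relEntropy q v ≤ chiSqDiv q v := by
  have hterm : ∀ x, q x * Real.log (q x / v x) ≤ (q x - v x) ^ 2 / v x + (q x - v x) := by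
    intro x
    have hv' := (hv x).ne'
    calc q x * Real.log (q x / v x) ≤ q x * (q x / v x - 1) := by
          rcases (hq x).eq_or_lt with h0 | h0
          · simp [← h0]
          · exact mul_le_mul_of_nonneg_left
              (Real.log_le_sub_one_of_pos (div_pos h0 (hv x))) (hq x)
      _ = (q x - v x) ^ 2 / v x + (q x - v x) := by field_simp; ring
  calc relEntropy q v ≤ ∑ x, ((q x - v x) ^ 2 / v x + (q x - v x)) :=
        Finset.sum_le_sum fun x _ => hterm x
    _ = chiSqDiv q v := by
        rw [Finset.sum_add_distrib, Finset.sum_sub_distrib, hsum, sub_self, add_zero, chiSqDiv]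

lemma chiSqDiv_le_sum_sq_div {q v : X → ℝ} {κ : ℝ} (hκ : 0 < κ) (hv : ∀ x, κ ≤ v x) :
    chiSqDiv q v ≤ (∑ x, (q x - v x) ^ 2) / κ := by
  rw [chiSqDiv, Finset.sum_div]
  exact Finset.sum_le_sum fun x _ => div_le_div_of_nonneg_left (sq_nonneg _) hκ (hv x)

lemma card_mul_le_one_of_le {v : X → ℝ} (hv : ∑ x, v x = 1) {κ : ℝ} (hκ : ∀ x, κ ≤ v x) :
    Fintype.card X * κ ≤ 1 := by
  calc Fintype.card X * κ = ∑ _x : X, κ := by rw [Finset.sum_const, nsmul_eq_mul, card_univ]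
    _ ≤ 1 := hv ▸ Finset.sum_le_sum fun x _ => hκ x

end Divergences

lemma sum_le_sum_mul_div_of_le {ι : Type*} [Fintype ι] {p f : ι → ℝ} (hp : ∀ i, 0 ≤ p i)
    (hf : ∀ i, 0 ≤ f i) {a : ℝ} (ha : 0 < a) {s : Finset ι} (hs : ∀ i ∈ s, a ≤ f i) :
    ∑ i ∈ s, p i ≤ (∑ i, p i * f i) / a := by
  rw [le_div_iff₀ ha, Finset.sum_mul]
  calc ∑ i ∈ s, p i * a ≤ ∑ i ∈ s, p i * f i :=
        Finset.sum_le_sum fun i hi => mul_le_mul_of_nonneg_left (hs i hi) (hp i)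
    _ ≤ ∑ i, p i * f i :=
        Finset.sum_le_sum_of_subset_of_nonneg (Finset.subset_univ s)
          fun i _ _ => mul_nonneg (hp i) (hf i)

lemma sum_le_card_mul_div_of_le_relEntropy {ι X : Type*} [Fintype ι] [Fintype X]
    {p : ι → ℝ} (hp : ∀ i, 0 ≤ p i) {q : ι → X → ℝ} (hq0 : ∀ i x, 0 ≤ q i x)
    (hq1 : ∀ i, ∑ x, q i x = 1) {v : X → ℝ} (hv1 : ∑ x, v x = 1) {κ : ℝ} (hκ : 0 < κ)
    (hκv : ∀ x, κ ≤ v x) {C : ℝ} (hmom : ∀ x, ∑ i, p i * (q i x - v x) ^ 2 ≤ C)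
    {a : ℝ} (ha : 0 < a) {s : Finset ι} (hs : ∀ i ∈ s, a ≤ relEntropy (q i) v) :
    ∑ i ∈ s, p i ≤ Fintype.card X * C / (κ * a) := by
  set f := fun i => ∑ x, (q i x - v x) ^ 2
  have hv : ∀ x, 0 < v x := fun x => hκ.trans_le (hκv x)
  have hsf : ∀ i ∈ s, κ * a ≤ f i := fun i hi => by
    rw [← le_div_iff₀' hκ]
    calc a ≤ relEntropy (q i) v := hs i hi
      _ ≤ chiSqDiv (q i) v := relEntropy_le_chiSqDiv (hq0 i) hv ((hq1 i).trans hv1.symm)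
      _ ≤ f i / κ := chiSqDiv_le_sum_sq_div hκ hκv
  have hpf : ∑ i, p i * f i ≤ Fintype.card X * C :=
    calc ∑ i, p i * f i = ∑ x, ∑ i, p i * (q i x - v x) ^ 2 := by
          simp only [f, Finset.mul_sum]; exact Finset.sum_comm
      _ ≤ ∑ _x : X, C := Finset.sum_le_sum fun x _ => hmom x
      _ = Fintype.card X * C := by rw [Finset.sum_const, nsmul_eq_mul, card_univ]
  calc ∑ i ∈ s, p i ≤ (∑ i, p i * f i) / (κ * a) :=
        sum_le_sum_mul_div_of_le hp (fun i => by positivity) (mul_pos hκ ha) hsf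
    _ ≤ Fintype.card X * C / (κ * a) := by gcongr

section POVM

variable {d : ℕ} {X : Type*} [Fintype X] {P : X → Matrix (Fin d) (Fin d) ℂ}

lemma re_trace_mmix_mul (A : Matrix (Fin d) (Fin d) ℂ) :
    (mmix d * A).trace.re = A.trace.re / d := by
  rw [mmix, Matrix.smul_mul, Matrix.one_mul, Matrix.trace_smul, smul_eq_mul,
    ← Complex.ofReal_natCast, ← Complex.ofReal_inv, Complex.re_ofReal_mul, inv_mul_eq_div]

lemma sum_trace_mul_of_sum_eq_one (hPsum : ∑ x, P x = 1) (σ : Matrix (Fin d) (Fin d) ℂ) :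
    ∑ x, (P x * σ).trace = σ.trace := by
  rw [← Matrix.trace_sum, ← Matrix.sum_mul, hPsum, Matrix.one_mul]

lemma sum_re_trace_mul_eq_one (hPsum : ∑ x, P x = 1) {σ : Matrix (Fin d) (Fin d) ℂ}
    (hσ : σ.trace = 1) : ∑ x, (P x * σ).trace.re = 1 := by
  rw [← Complex.re_sum, sum_trace_mul_of_sum_eq_one hPsum, hσ, Complex.one_re]

lemma sum_re_trace_div_eq_one (hd : d ≠ 0) (hPsum : ∑ x, P x = 1) :
    ∑ x, (P x).trace.re / d = 1 := by
  have := congrArg Complex.re (sum_trace_mul_of_sum_eq_one hPsum 1)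
  simp only [Matrix.mul_one, Complex.re_sum, Matrix.trace_one, Fintype.card_fin] at this
  rw [← Finset.sum_div, this, Complex.natCast_re, div_self (Nat.cast_ne_zero.mpr hd)]

lemma posSemidef_one_sub_of_sum_eq_one (hP : ∀ x, (P x).PosSemidef) (hPsum : ∑ x, P x = 1)
    (x : X) : (1 - P x).PosSemidef := by
  classical
  rw [← hPsum, ← Finset.add_sum_erase _ _ (Finset.mem_univ x), add_sub_cancel_left]
  exact posSemidef_sum _ fun y _ => hP y

lemma obsEnt_eq_log_sub_relEntropy (hd : 0 < d) (hPsum : ∑ x, P x = 1)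
    (hV : ∀ x, 0 < (P x).trace.re) {σ : Matrix (Fin d) (Fin d) ℂ} (hσ : σ.trace = 1) :
    obsEnt P σ = Real.log d -
      relEntropy (fun x => (P x * σ).trace.re) (fun x => (P x).trace.re / d) := by
  exact neg_sum_mul_log_div_eq_log_sub_relEntropy (fun x => (hV x).ne')
    (sum_re_trace_mul_eq_one hPsum hσ) (by positivity)

variable [Nonempty X]

lemma kappa_eq_iInf : kappa P = ⨅ x, (P x).trace.re / d := by
  simp only [kappa, re_trace_mmix_mul]

lemma kappa_le (x : X) : kappa P ≤ (P x).trace.re / d :=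
  (kappa_eq_iInf (P := P)) ▸ ciInf_le (Finite.bddBelow_range _) x

lemma kappa_pos (hd : 0 < d) (hV : ∀ x, 0 < (P x).trace.re) : 0 < kappa P := by
  obtain ⟨x, hx⟩ := exists_eq_ciInf_of_finite (f := fun x => (P x).trace.re / d)
  exact (kappa_eq_iInf (P := P)) ▸ hx ▸ div_pos (hV x) (by positivity)

lemma card_le_one_div_kappa_sq (hd : 0 < d) (hPsum : ∑ x, P x = 1)
    (hV : ∀ x, 0 < (P x).trace.re) : (Fintype.card X : ℝ) ≤ 1 / kappa P ^ 2 := by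
  have hκ := kappa_pos hd hV
  have hv1 := sum_re_trace_div_eq_one hd.ne' hPsum
  have hκ1 : kappa P ≤ 1 := (kappa_le (Classical.arbitrary X)).trans <| hv1 ▸
    Finset.single_le_sum (fun x _ => (hκ.trans_le (kappa_le x)).le) (Finset.mem_univ _)
  calc (Fintype.card X : ℝ) ≤ 1 / kappa P :=
        (le_div_iff₀ hκ).mpr (card_mul_le_one_of_le hv1 kappa_le)
    _ ≤ 1 / kappa P ^ 2 := one_div_le_one_div_of_le (by positivity) (by nlinarith)

end POVM

open Classical in
theorem obsEnt_concentration_two_design_general {d : ℕ} (hd : 2 ≤ d)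
    (ε : ℝ) (hε : 0 ≤ ε)
    (N : ℕ) (p : Fin N → ℝ) (U : Fin N → Matrix (Fin d) (Fin d) ℂ)
    (hp0 : ∀ i, 0 ≤ p i)
    (hU : ∀ i, U i ∈ Matrix.unitaryGroup (Fin d) ℂ)
    (hdesign : ∀ φ : Fin d → ℂ, star φ ⬝ᵥ φ = 1 →
      ∀ Pm : Matrix (Fin d) (Fin d) ℂ, Pm.PosSemidef →
        ((1 : Matrix (Fin d) (Fin d) ℂ) - Pm).PosSemidef →
        ∑ i, p i * |(Pm * (U i * Matrix.vecMulVec φ (star φ) * (U i)ᴴ)).trace.re -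
            ((mmix d) * Pm).trace.re| ^ 2
          ≤ (1 + ε) * (4 / d))
    (ρ : Matrix (Fin d) (Fin d) ℂ) (hρ : ρ.PosSemidef) (hρ1 : ρ.trace = 1)
    {X : Type} [Fintype X] [Nonempty X]
    (P : X → Matrix (Fin d) (Fin d) ℂ)
    (hPpos : ∀ x, (P x).PosSemidef) (hPsum : ∑ x, P x = 1)
    (hV : ∀ x, 0 < (P x).trace.re)
    (δ : ℝ) (hδ : 0 < δ) :
    ∑ i ∈ Finset.univ.filter (fun i =>
        obsEnt P (U i * ρ * (U i)ᴴ) ≤ (1 - δ) * Real.log d), p i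
      ≤ (1 / ((kappa P)^3 * d * Real.log d)) * (4 * (1 + ε) / δ) := by
  have hd0 : 0 < d := by omega
  have hlogd : 0 < Real.log d := Real.log_pos (by exact_mod_cast hd)
  have hσ1 : ∀ i, (U i * ρ * (U i)ᴴ).trace = 1 :=
    fun i => (trace_conj_of_mem_unitaryGroup (hU i) ρ).trans hρ1
  have hmom : ∀ x, ∑ i, p i * ((P x * (U i * ρ * (U i)ᴴ)).trace.re - (P x).trace.re / d) ^ 2
      ≤ (1 + ε) * (4 / d) := by
    intro x
    simp only [trace_mul_conj, ← re_trace_mmix_mul]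
    refine sum_mul_sq_re_trace_sub_le_of_pure hp0 _ (fun φ hφ => ?_) hρ hρ1
    simpa only [trace_mul_conj, sq_abs] using
      hdesign φ hφ (P x) (hPpos x) (posSemidef_one_sub_of_sum_eq_one hPpos hPsum x)
  have hκ := kappa_pos hd0 hV
  calc _ ≤ Fintype.card X * ((1 + ε) * (4 / d)) / (kappa P * (δ * Real.log d)) := by
        refine sum_le_card_mul_div_of_le_relEntropy hp0
          (fun i x => (hPpos x).re_trace_mul_nonneg (hρ.mul_mul_conjTranspose_same (U i)))
          (fun i => sum_re_trace_mul_eq_one hPsum (hσ1 i)) (sum_re_trace_div_eq_one hd0.ne' hPsum)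
          hκ kappa_le hmom (by positivity) (fun i hi => ?_)
        have hent := (Finset.mem_filter.mp hi).2
        rw [obsEnt_eq_log_sub_relEntropy hd0 hPsum hV (hσ1 i)] at hent
        linarith
    _ ≤ 1 / kappa P ^ 2 * ((1 + ε) * (4 / d)) / (kappa P * (δ * Real.log d)) := by
        gcongr
        exact card_le_one_div_kappa_sq hd0 hPsum hV
    _ = _ := by field_simp

open Classical in
/-- **Theorem 3 (Observational entropy concentration for 2-designs).** If the ensemble
`{(pᵢ, Uᵢ)}` satisfies the second-moment bound
`∑ᵢ pᵢ |Tr[Uᵢ|φ⟩⟨φ|Uᵢ†P] - Tr[uP]|² ≤ (1+ε)·4/d` on all pure states (the property of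
`ε`-approximate 2-designs), then for every density matrix `ρ`, POVM `P` and `δ > 0`,
the probability that `S_P(UᵢρUᵢ†) ≤ (1-δ) log d` is at most
`(1/(κ(P)³ d log d)) · 4(1+ε)/δ`. -/
theorem obsEnt_concentration_two_design {d : ℕ} (hd : 2 ≤ d)
    (ε : ℝ) (hε : 0 ≤ ε)
    (N : ℕ) (p : Fin N → ℝ) (U : Fin N → Matrix (Fin d) (Fin d) ℂ)
    (hp0 : ∀ i, 0 ≤ p i) (hp1 : ∑ i, p i = 1)
    (hU : ∀ i, U i ∈ Matrix.unitaryGroup (Fin d) ℂ)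
    (hdesign : ∀ φ : Fin d → ℂ, star φ ⬝ᵥ φ = 1 →
      ∀ Pm : Matrix (Fin d) (Fin d) ℂ, Pm.PosSemidef →
        ((1 : Matrix (Fin d) (Fin d) ℂ) - Pm).PosSemidef →
        ∑ i, p i * |(Pm * (U i * Matrix.vecMulVec φ (star φ) * (U i)ᴴ)).trace.re -
            ((mmix d) * Pm).trace.re| ^ 2
          ≤ (1 + ε) * (4 / d))
    (ρ : Matrix (Fin d) (Fin d) ℂ) (hρ : ρ.PosSemidef) (hρ1 : ρ.trace = 1)
    {X : Type} [Fintype X] [Nonempty X]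
    (P : X → Matrix (Fin d) (Fin d) ℂ)
    (hPpos : ∀ x, (P x).PosSemidef) (hPsum : ∑ x, P x = 1)
    (hV : ∀ x, 0 < (P x).trace.re)
    (δ : ℝ) (hδ : 0 < δ) :
    ∑ i ∈ Finset.univ.filter (fun i =>
        obsEnt P (U i * ρ * (U i)ᴴ) ≤ (1 - δ) * Real.log d), p i
      ≤ (1 / ((kappa P)^3 * d * Real.log d)) * (4 * (1 + ε) / δ) :=
  obsEnt_concentration_two_design_general hd ε hε N p U hp0 hU hdesign ρ hρ hρ1 P hPpos hPsum hV δ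
    hδ
end
end

section
/- Non-decrease of observational entropy from macroscopic initial states: Let ρ be a density matrix on ℂ^d and P = {P_x}_{x∈X} a POVM on ℂ^d with all volume terms V_x = Tr[P_x] strictly positive. If ρ is macroscopic for P, i.e. ρ = Σ_x Tr[P_x ρ] P_x / V_x, then for every d×d unitary matrix U, S_P(U ρ U†) ≥ S_P(ρ). -/
open MeasureTheory Matrix Finset Filter
open scoped ComplexOrder

noncomputable section

/-! A macroscopic state is a mixture `ρ = ∑ y, r y • P y` with `r y = Tr[P_y ρ] / V_y ≥ 0`, so the
outcome probabilities of `UρU†` are `p x = ∑ y, T x y * r y` with `T x y = Re Tr[P_x U P_y U†] ≥ 0`.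
Unitarity and `∑ P = 1` make the row and column sums of `T` equal to the volumes, so `p x / V x` is
an average of the `r y`. Jensen's inequality for the convex `f t = t log t`, weighted by `V x` and
summed over `x`, gives `∑ V x f(p x / V x) ≤ ∑ V y f(r y)`, i.e. `S_P(ρ) ≤ S_P(UρU†)`. -/

namespace Matrix

variable {n : Type*} [Fintype n]

theorem PosSemidef.trace_mul_nonneg {𝕜 : Type*} [RCLike 𝕜] {A B : Matrix n n 𝕜}
    (hA : A.PosSemidef) (hB : B.PosSemidef) : 0 ≤ (A * B).trace := by
  classical
  obtain ⟨C, rfl⟩ : ∃ C : Matrix n n 𝕜, B = Cᴴ * C := by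
    open scoped MatrixOrder in
    exact CStarAlgebra.nonneg_iff_eq_star_mul_self.mp hB.nonneg
  rw [← Matrix.mul_assoc, trace_mul_cycle]
  exact (hA.mul_mul_conjTranspose_same C).trace_nonneg

theorem PosSemidef.re_trace_eq_zero_iff {A : Matrix n n ℂ} (hA : A.PosSemidef) :
    A.trace.re = 0 ↔ A = 0 := by
  rw [← hA.trace_eq_zero_iff, Complex.ext_iff, Complex.zero_re, Complex.zero_im,
    iff_self_and]
  exact fun _ => (Complex.nonneg_iff.mp hA.trace_nonneg).2.symm

theorem re_trace_mul_conj_sum_smul {X : Type*} [Fintype X] (B U : Matrix n n ℂ)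
    (P : X → Matrix n n ℂ) (c : X → ℝ) :
    (B * (U * (∑ y, c y • P y) * Uᴴ)).trace.re = ∑ y, (B * (U * P y * Uᴴ)).trace.re * c y := by
  simp only [Finset.mul_sum, Finset.sum_mul, mul_smul_comm, smul_mul_assoc, trace_sum,
    trace_smul, Complex.re_sum, Complex.real_smul, Complex.re_ofReal_mul, mul_comm]

variable [DecidableEq n] {R : Type*} [CommRing R] [StarRing R] {X : Type*} [Fintype X]
  {P : X → Matrix n n R} {U : Matrix n n R}

theorem sum_trace_mul_unitary_conj_left (hP : ∑ x, P x = 1) (hU : U ∈ unitaryGroup n R)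
    (A : Matrix n n R) : ∑ x, (P x * (U * A * Uᴴ)).trace = A.trace := by
  rw [← trace_sum, ← Finset.sum_mul, hP, Matrix.one_mul, trace_mul_cycle,
    ← star_eq_conjTranspose, Unitary.star_mul_self_of_mem hU, Matrix.one_mul]

theorem sum_trace_mul_unitary_conj_right (hP : ∑ x, P x = 1) (hU : U ∈ unitaryGroup n R)
    (B : Matrix n n R) : ∑ y, (B * (U * P y * Uᴴ)).trace = B.trace := by
  rw [← trace_sum, ← Finset.mul_sum, ← Finset.sum_mul, ← Finset.mul_sum, hP, Matrix.mul_one,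
    ← star_eq_conjTranspose, Unitary.mul_star_self_of_mem hU, Matrix.mul_one]

end Matrix

theorem obsEnt_eq_neg_sum_mul_mul_log {d : ℕ} {X : Type*} [Fintype X]
    {P : X → Matrix (Fin d) (Fin d) ℂ} (hP : ∀ x, (P x).PosSemidef) (ρ : Matrix (Fin d) (Fin d) ℂ) :
    obsEnt P ρ = -∑ x, (P x).trace.re *
      ((P x * ρ).trace.re / (P x).trace.re * Real.log ((P x * ρ).trace.re / (P x).trace.re)) := by
  unfold obsEnt
  congr 1
  refine Finset.sum_congr rfl fun x _ => ?_
  by_cases hV : (P x).trace.re = 0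
  · -- `V x = 0` forces `P x = 0`, so both terms vanish despite the division by zero.
    simp [(hP x).re_trace_eq_zero_iff.mp hV]
  · rw [← mul_assoc, mul_div_cancel₀ _ hV]

theorem ConvexOn.sum_mul_map_div_le {ι κ : Type*} [Fintype ι] [Fintype κ] {s : Set ℝ}
    {f : ℝ → ℝ} (hf : ConvexOn ℝ s f) {T : ι → κ → ℝ} {v : ι → ℝ} {w : κ → ℝ} {r : κ → ℝ}
    (hT : ∀ i j, 0 ≤ T i j) (hrow : ∀ i, ∑ j, T i j = v i) (hcol : ∀ j, ∑ i, T i j = w j)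
    (hr : ∀ j, r j ∈ s) :
    ∑ i, v i * f ((∑ j, T i j * r j) / v i) ≤ ∑ j, w j * f (r j) := by
  have hrow_le : ∀ i, v i * f ((∑ j, T i j * r j) / v i) ≤ ∑ j, T i j * f (r j) := by
    intro i
    rcases (hrow i ▸ Finset.sum_nonneg fun j _ => hT i j).eq_or_lt with hv | hv
    · have hTi : ∀ j, T i j = 0 := fun j =>
        (Finset.sum_eq_zero_iff_of_nonneg fun j _ => hT i j).mp (hrow i ▸ hv.symm) j (mem_univ j)
      simp [← hv, hTi]
    have jensen := hf.map_sum_le (t := univ) (w := fun j => T i j / v i) (p := r)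
      (fun j _ => div_nonneg (hT i j) hv.le) (by rw [← Finset.sum_div, hrow, div_self hv.ne'])
      (fun j _ => hr j)
    simp only [smul_eq_mul, div_mul_eq_mul_div, ← Finset.sum_div] at jensen
    calc v i * f ((∑ j, T i j * r j) / v i)
        ≤ v i * ((∑ j, T i j * f (r j)) / v i) := mul_le_mul_of_nonneg_left jensen hv.le
      _ = ∑ j, T i j * f (r j) := mul_div_cancel₀ _ hv.ne'
  calc ∑ i, v i * f ((∑ j, T i j * r j) / v i)
      ≤ ∑ i, ∑ j, T i j * f (r j) := Finset.sum_le_sum fun i _ => hrow_le i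
    _ = ∑ j, w j * f (r j) := by
      rw [Finset.sum_comm]
      simp only [← Finset.sum_mul, hcol]

theorem obsEnt_nondecreasing_from_macroscopic_general {d : ℕ} {X : Type} [Fintype X]
    (P : X → Matrix (Fin d) (Fin d) ℂ)
    (hPpos : ∀ x, (P x).PosSemidef) (hPsum : ∑ x, P x = 1)
    (ρ : Matrix (Fin d) (Fin d) ℂ) (hρ : ρ.PosSemidef)
    (hmacro : ρ = ∑ x, (((P x * ρ).trace.re) / ((P x).trace.re)) • P x) :
    ∀ U : Matrix (Fin d) (Fin d) ℂ, U ∈ Matrix.unitaryGroup (Fin d) ℂ →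
      obsEnt P ρ ≤ obsEnt P (U * ρ * Uᴴ) := by
  intro U hU
  set r : X → ℝ := fun y => (P y * ρ).trace.re / (P y).trace.re
  set T : X → X → ℝ := fun x y => (P x * (U * P y * Uᴴ)).trace.re
  have hT : ∀ x y, 0 ≤ T x y := fun x y =>
    (Complex.nonneg_iff.mp ((hPpos x).trace_mul_nonneg
      ((hPpos y).mul_mul_conjTranspose_same U))).1
  have hrow : ∀ x, ∑ y, T x y = (P x).trace.re := fun x => by
    simp only [T, ← Complex.re_sum, sum_trace_mul_unitary_conj_right hPsum hU]
  have hcol : ∀ y, ∑ x, T x y = (P y).trace.re := fun y => by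
    simp only [T, ← Complex.re_sum, sum_trace_mul_unitary_conj_left hPsum hU]
  have hr : ∀ y, r y ∈ Set.Ici 0 := fun y =>
    div_nonneg (Complex.nonneg_iff.mp ((hPpos y).trace_mul_nonneg hρ)).1
      (Complex.nonneg_iff.mp (hPpos y).trace_nonneg).1
  have hp : ∀ x, (P x * (U * ρ * Uᴴ)).trace.re = ∑ y, T x y * r y := fun x => by
    conv_lhs => rw [hmacro]
    exact re_trace_mul_conj_sum_smul _ _ _ _
  rw [obsEnt_eq_neg_sum_mul_mul_log hPpos, obsEnt_eq_neg_sum_mul_mul_log hPpos, neg_le_neg_iff]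
  simp only [hp]
  exact Real.convexOn_mul_log.sum_mul_map_div_le hT hrow hcol hr

/-- **Non-decrease of observational entropy from macroscopic initial states:** if `ρ` is
macroscopic for `P`, then `S_P(UρU†) ≥ S_P(ρ)` for every unitary `U`. -/
theorem obsEnt_nondecreasing_from_macroscopic {d : ℕ} {X : Type} [Fintype X]
    (P : X → Matrix (Fin d) (Fin d) ℂ)
    (hPpos : ∀ x, (P x).PosSemidef) (hPsum : ∑ x, P x = 1)
    (hV : ∀ x, 0 < (P x).trace.re)
    (ρ : Matrix (Fin d) (Fin d) ℂ) (hρ : ρ.PosSemidef) (hρ1 : ρ.trace = 1)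
    (hmacro : ρ = ∑ x, (((P x * ρ).trace.re) / ((P x).trace.re)) • P x) :
    ∀ U : Matrix (Fin d) (Fin d) ℂ, U ∈ Matrix.unitaryGroup (Fin d) ℂ →
      obsEnt P ρ ≤ obsEnt P (U * ρ * Uᴴ) :=
  obsEnt_nondecreasing_from_macroscopic_general P hPpos hPsum ρ hρ hmacro
end
end
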